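/- Let F be a group, S a normal subgroup of F, and set R = S·γ_2(F). Then for every m ≥ 1, [R, F, ..., F] (m copies of F) equals ρ_{m+1}(S)·γ_{m+2}(F), where ρ_1(S) = S and ρ_{k+1}(S) = [ρ_k(S), F]. -/

import Mathlib

/-!
Since `⁅K, ⊤⁆ ≤ N` means that `K` lies in the preimage of the centre of `G ⧸ N`, which is a
subgroup, the map `K ↦ ⁅K, ⊤⁆` preserves joins of arbitrary subgroups. Iterating,
`[S ⊔ γ₂(F), F, …, F] = [S, F, …, F] ⊔ [γ₂(F), F, …, F]`, and the second term is `γ_{m+2}(F)`.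
-/

/-- `iterComm S 0 = S`, `iterComm S (m+1) = [iterComm S m, F]`; so
`ρ_{m+1}(S) = iterComm S m` and `[R, F, …, F]` (`m` copies) `= iterComm R m`. -/
def iterComm {F : Type*} [Group F] (S : Subgroup F) : ℕ → Subgroup F
  | 0 => S
  | n + 1 => ⁅iterComm S n, (⊤ : Subgroup F)⁆

namespace Subgroup

variable {G : Type*} [Group G]

instance commutator_top_normal (H : Subgroup G) : ⁅H, (⊤ : Subgroup G)⁆.Normal :=
  normalizer_eq_top_iff.mp (top_le_iff.mp (normalizer_commutator_ge_right H ⊤))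

theorem commutator_top_le_iff_le_upperCentralSeriesStep {H N : Subgroup G} [N.Normal] :
    ⁅H, (⊤ : Subgroup G)⁆ ≤ N ↔ H ≤ upperCentralSeriesStep N := by
  simp only [commutator_le, mem_top, forall_const]
  rfl

theorem commutator_sup_top (H₁ H₂ : Subgroup G) :
    ⁅H₁ ⊔ H₂, (⊤ : Subgroup G)⁆ = ⁅H₁, (⊤ : Subgroup G)⁆ ⊔ ⁅H₂, (⊤ : Subgroup G)⁆ := by
  refine le_antisymm ?_ (sup_le (commutator_mono le_sup_left le_rfl)
    (commutator_mono le_sup_right le_rfl))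
  rw [commutator_top_le_iff_le_upperCentralSeriesStep, sup_le_iff,
    ← commutator_top_le_iff_le_upperCentralSeriesStep,
    ← commutator_top_le_iff_le_upperCentralSeriesStep]
  exact ⟨le_sup_left, le_sup_right⟩

end Subgroup

section iterComm

variable {G : Type*} [Group G]

theorem iterComm_sup (H₁ H₂ : Subgroup G) (n : ℕ) :
    iterComm (H₁ ⊔ H₂) n = iterComm H₁ n ⊔ iterComm H₂ n := by
  induction n with
  | zero => rfl
  | succ n ih => rw [iterComm, ih, Subgroup.commutator_sup_top]; rfl

theorem iterComm_iterComm (H : Subgroup G) (k n : ℕ) :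
    iterComm (iterComm H k) n = iterComm H (k + n) := by
  induction n with
  | zero => rfl
  | succ n ih => rw [iterComm, ih]; rfl

theorem iterComm_top (n : ℕ) :
    iterComm (⊤ : Subgroup G) n = (⊤ : Subgroup G).lowerCentralSeries n := by
  induction n with
  | zero => rfl
  | succ n ih => rw [iterComm, ih]; rfl

end iterComm

/-- In Mathlib's indexing `γ_n(F) = (⊤ : Subgroup F).lowerCentralSeries (n - 1)`. -/
theorem iterComm_join_gamma_general {F : Type*} [Group F] (S : Subgroup F)
    (R : Subgroup F) (hR : R = S ⊔ (⊤ : Subgroup F).lowerCentralSeries 1) :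
    ∀ m : ℕ, 1 ≤ m → iterComm R m = iterComm S m ⊔ (⊤ : Subgroup F).lowerCentralSeries (m + 1) := by
  intro m _
  rw [hR, iterComm_sup, ← iterComm_top, ← iterComm_top, iterComm_iterComm, add_comm]

/-- Let `S ⊴ F` and `R = S·γ₂(F)` (the join, since both are normal). Then for
every `m ≥ 1`, `[R, F, …, F]` (`m` copies of `F`) equals `ρ_{m+1}(S)·γ_{m+2}(F)`.
In Mathlib's indexing `γ_n(F) = lowerCentralSeries F (n-1)`. -/
theorem iterComm_join_gamma {F : Type*} [Group F] (S : Subgroup F) (hS : S.Normal)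
    (R : Subgroup F) (hR : R = S ⊔ (⊤ : Subgroup F).lowerCentralSeries 1) :
    ∀ m : ℕ, 1 ≤ m → iterComm R m = iterComm S m ⊔ (⊤ : Subgroup F).lowerCentralSeries (m + 1) :=
  iterComm_join_gamma_general S R hR
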